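/- For m ≥ 1, 1 ≤ c ≤ d−1, 1 ≤ r ≤ binom(m+d−c, d−c), and any q ≥ d+1 (in fact any q ≥ d), we have H_r(d−c, m; q) + c·q^(m−1) ≤ H_r(d, m; q), where H_r(d,m;q) = Σ_{i=1}^{m} β_i q^(m−i) with (β_1,...,β_{m+1}) = w_r(d,m). -/

import Mathlib

open Finset

/-- `u` is strictly larger than `w` in lexicographic order (tuples encoded as
functions `ℕ → ℕ`, with entries in positions `1,…,m+1`). -/
def lexGT (u w : ℕ → ℕ) : Prop := ∃ i, (∀ j, j < i → u j = w j) ∧ w i < u i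

/-- `u ≥ w` in lexicographic order. -/
def lexGE (u w : ℕ → ℕ) : Prop := u = w ∨ lexGT u w

/-- `Ω(d,m)`: tuples `(γ_1,…,γ_{m+1})` of nonnegative integers summing to `d`,
encoded as functions `ℕ → ℕ` supported on `{1,…,m+1}`. -/
def Omega (d m : ℕ) : Set (ℕ → ℕ) :=
  {γ | (∀ i, i = 0 ∨ m + 1 < i → γ i = 0) ∧ ∑ i ∈ Finset.Icc 1 (m + 1), γ i = d}

/-- `Ω'(d,m)`: `Ω(d,m)` with the tuples having `d` in position `j` (`2 ≤ j ≤ m`)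
and zeros elsewhere removed. -/
def OmegaP (d m : ℕ) : Set (ℕ → ℕ) :=
  Omega d m \ {γ | ∃ j, 2 ≤ j ∧ j ≤ m ∧ γ = fun i => if i = j then d else 0}

/-- Binomial coefficient on integers, equal to `0` when either argument is negative. -/
def chooseZ (n k : ℤ) : ℤ := if 0 ≤ n ∧ 0 ≤ k then Nat.choose n.toNat k.toNat else 0

/- ----------------- auxiliary lemmas ----------------- -/

lemma lexGT_irrefl (u : ℕ → ℕ) : ¬ lexGT u u := by
  rintro ⟨i, -, hi⟩; exact lt_irrefl _ hi

lemma lexGT_trans {u v w : ℕ → ℕ} (h1 : lexGT u v) (h2 : lexGT v w) : lexGT u w := by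
  obtain ⟨i, hi, hi'⟩ := h1
  obtain ⟨j, hj, hj'⟩ := h2
  rcases lt_trichotomy i j with h | h | h
  · refine ⟨i, fun l hl => (hi l hl).trans (hj l (hl.trans h)), ?_⟩
    have := hj i h; omega
  · subst h
    exact ⟨i, fun l hl => (hi l hl).trans (hj l hl), hj'.trans hi'⟩
  · refine ⟨j, fun l hl => (hi l (hl.trans h)).trans (hj l hl), ?_⟩
    have := hi j h; omega

lemma lexGT_asymm {u w : ℕ → ℕ} (h1 : lexGT u w) (h2 : lexGT w u) : False := by
  obtain ⟨i, hi, hi'⟩ := h1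
  obtain ⟨j, hj, hj'⟩ := h2
  rcases lt_trichotomy i j with h | h | h
  · rw [hj i h] at hi'; exact lt_irrefl _ hi'
  · subst h; exact lt_irrefl _ (hi'.trans hj')
  · rw [hi j h] at hj'; exact lt_irrefl _ hj'

lemma lex_trichotomy (u w : ℕ → ℕ) : u = w ∨ lexGT u w ∨ lexGT w u := by
  by_cases h : u = w
  · exact Or.inl h
  · have hne : ∃ i, u i ≠ w i := by
      by_contra hc; push_neg at hc; exact h (funext hc)
    classical
    have h1 : u (Nat.find hne) ≠ w (Nat.find hne) := Nat.find_spec hne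
    have h2 : ∀ j, j < Nat.find hne → u j = w j := by
      intro j hj
      by_contra hcj
      exact absurd hj (not_lt.mpr (Nat.find_le hcj))
    rcases lt_or_gt_of_ne h1 with hlt | hlt
    · exact Or.inr (Or.inr ⟨Nat.find hne, fun j hj => (h2 j hj).symm, hlt⟩)
    · exact Or.inr (Or.inl ⟨Nat.find hne, h2, hlt⟩)

lemma omega_finite (d m : ℕ) : (Omega d m).Finite := by
  have hsub : (Omega d m) ⊆ (fun f : Fin (m + 2) → Fin (d + 1) => fun i : ℕ =>
      if h : i < m + 2 then (f ⟨i, h⟩ : ℕ) else 0) '' Set.univ := by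
    intro γ hγ
    have hbd : ∀ i, γ i ≤ d := by
      intro i
      by_cases hi : 1 ≤ i ∧ i ≤ m + 1
      · calc γ i ≤ ∑ j ∈ Finset.Icc 1 (m + 1), γ j :=
              Finset.single_le_sum (fun _ _ => Nat.zero_le _) (Finset.mem_Icc.mpr hi)
          _ = d := hγ.2
      · rw [hγ.1 i (by omega)]; exact Nat.zero_le _
    refine ⟨fun j => ⟨γ j, Nat.lt_succ_of_le (hbd j)⟩, Set.mem_univ _, ?_⟩
    funext i
    by_cases h : i < m + 2
    · simp [h]
    · simp [h, hγ.1 i (by omega : i = 0 ∨ m + 1 < i)]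
  exact Set.Finite.subset (Set.Finite.image _ Set.finite_univ) hsub

lemma H_mono (d m q : ℕ) (hq : d + 1 ≤ q) {u w : ℕ → ℕ}
    (hu : u ∈ Omega d m) (hw : w ∈ Omega d m) (h : lexGE u w) :
    ∑ i ∈ Finset.Icc 1 m, w i * q ^ (m - i) ≤ ∑ i ∈ Finset.Icc 1 m, u i * q ^ (m - i) := by
  rcases h with rfl | ⟨i0, hpre, hlt⟩
  · exact le_refl _
  have hq1 : 1 ≤ q := by omega
  have h1 : 1 ≤ i0 := by
    by_contra hcon
    have h0 : i0 = 0 := by omega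
    rw [h0, hu.1 0 (Or.inl rfl), hw.1 0 (Or.inl rfl)] at hlt
    exact lt_irrefl _ hlt
  have h2 : i0 ≤ m + 1 := by
    by_contra hcon
    rw [hu.1 i0 (Or.inr (by omega)), hw.1 i0 (Or.inr (by omega))] at hlt
    exact lt_irrefl _ hlt
  have h3 : i0 ≠ m + 1 := by
    intro he
    have hpm : ∑ i ∈ Finset.Icc 1 m, u i = ∑ i ∈ Finset.Icc 1 m, w i :=
      Finset.sum_congr rfl (fun j hj => hpre j (by
        have := (Finset.mem_Icc.mp hj).2; omega))
    have hsu : (∑ i ∈ Finset.Icc 1 m, u i) + u (m + 1) = d := by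
      rw [← Finset.sum_Icc_succ_top (by omega : 1 ≤ m + 1)]; exact hu.2
    have hsw : (∑ i ∈ Finset.Icc 1 m, w i) + w (m + 1) = d := by
      rw [← Finset.sum_Icc_succ_top (by omega : 1 ≤ m + 1)]; exact hw.2
    rw [he] at hlt
    omega
  have h4 : i0 ≤ m := by omega
  rw [← Finset.Ico_add_one_right_eq_Icc 1 m,
    ← Finset.sum_Ico_consecutive (fun i => w i * q ^ (m - i)) h1 (by omega : i0 ≤ m + 1),
    ← Finset.sum_Ico_consecutive (fun i => u i * q ^ (m - i)) h1 (by omega : i0 ≤ m + 1)]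
  have hpre' : ∑ i ∈ Finset.Ico 1 i0, w i * q ^ (m - i)
      = ∑ i ∈ Finset.Ico 1 i0, u i * q ^ (m - i) :=
    Finset.sum_congr rfl (fun j hj => by rw [hpre j (Finset.mem_Ico.mp hj).2])
  rw [hpre']
  apply Nat.add_le_add_left
  rw [Finset.sum_eq_sum_Ico_succ_bot (by omega : i0 < m + 1),
    Finset.sum_eq_sum_Ico_succ_bot (by omega : i0 < m + 1)]
  -- tail bound
  have hTle : ∑ i ∈ Finset.Ico (i0 + 1) (m + 1), w i * q ^ (m - i)
      ≤ d * q ^ (m - i0 - 1) := by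
    calc ∑ i ∈ Finset.Ico (i0 + 1) (m + 1), w i * q ^ (m - i)
        ≤ ∑ i ∈ Finset.Ico (i0 + 1) (m + 1), w i * q ^ (m - i0 - 1) := by
          apply Finset.sum_le_sum
          intro i hi
          have hi' := Finset.mem_Ico.mp hi
          exact Nat.mul_le_mul_left _ (Nat.pow_le_pow_right hq1 (by omega))
      _ = (∑ i ∈ Finset.Ico (i0 + 1) (m + 1), w i) * q ^ (m - i0 - 1) := by
          rw [Finset.sum_mul]
      _ ≤ d * q ^ (m - i0 - 1) := by
          apply Nat.mul_le_mul_right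
          rw [← hw.2]
          apply Finset.sum_le_sum_of_subset
          intro i hi
          have hi' := Finset.mem_Ico.mp hi
          exact Finset.mem_Icc.mpr ⟨by omega, by omega⟩
  have hT1 : (∑ i ∈ Finset.Ico (i0 + 1) (m + 1), w i * q ^ (m - i)) + 1 ≤ q ^ (m - i0) := by
    rcases eq_or_lt_of_le h4 with he | hlt'
    · have : Finset.Ico (i0 + 1) (m + 1) = ∅ := by
        apply Finset.Ico_eq_empty; omega
      rw [this, Finset.sum_empty]
      have h0 : m - i0 = 0 := by omega
      rw [h0, pow_zero]
      omega
    · have hpe : 1 ≤ q ^ (m - i0 - 1) := Nat.one_le_pow _ _ (by omega)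
      have he : m - i0 = (m - i0 - 1) + 1 := by omega
      have hqq : q ^ (m - i0) = q ^ (m - i0 - 1) * q := by
        conv_lhs => rw [show m - i0 = (m - i0 - 1) + 1 from by omega]
        rw [pow_succ]
      have hd : d * q ^ (m - i0 - 1) + 1 ≤ q ^ (m - i0 - 1) * q := by
        calc d * q ^ (m - i0 - 1) + 1 ≤ d * q ^ (m - i0 - 1) + q ^ (m - i0 - 1) := by omega
          _ = q ^ (m - i0 - 1) * (d + 1) := by ring
          _ ≤ q ^ (m - i0 - 1) * q := Nat.mul_le_mul_left _ hq
      rw [hqq]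
      omega
  have hmul : (w i0 + 1) * q ^ (m - i0) ≤ u i0 * q ^ (m - i0) :=
    Nat.mul_le_mul_right _ (by omega)
  have hexp : (w i0 + 1) * q ^ (m - i0) = w i0 * q ^ (m - i0) + q ^ (m - i0) := by ring
  have hTu : 0 ≤ ∑ i ∈ Finset.Ico (i0 + 1) (m + 1), u i * q ^ (m - i) := Nat.zero_le _
  omega

/-- Add `c` to the first coordinate. -/
def addFst (c : ℕ) (γ : ℕ → ℕ) : ℕ → ℕ := fun i => if i = 1 then γ 1 + c else γ i

lemma addFst_injective (c : ℕ) : Function.Injective (addFst c) := by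
  intro u v h
  funext i
  have hi := congrFun h i
  by_cases h1 : i = 1
  · subst h1; simp [addFst] at hi; omega
  · simpa [addFst, h1] using hi

lemma addFst_mem {d c m : ℕ} (hcd : c ≤ d) {γ : ℕ → ℕ} (hγ : γ ∈ Omega (d - c) m) :
    addFst c γ ∈ Omega d m := by
  constructor
  · intro i hi
    have h1 : i ≠ 1 := by omega
    rw [show addFst c γ i = γ i from by simp [addFst, h1]]
    exact hγ.1 i hi
  · have hrw : ∀ i ∈ Finset.Icc 1 (m + 1), addFst c γ i = γ i + (if i = 1 then c else 0) := by
      intro i _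
      by_cases h : i = 1 <;> simp [addFst, h]
    rw [Finset.sum_congr rfl hrw, Finset.sum_add_distrib, hγ.2,
      Finset.sum_ite_eq' (Finset.Icc 1 (m + 1)) 1 (fun _ => c),
      if_pos (Finset.mem_Icc.mpr ⟨le_refl 1, by omega⟩)]
    omega

lemma addFst_lexGT {c : ℕ} {u w : ℕ → ℕ} (h : lexGT u w) : lexGT (addFst c u) (addFst c w) := by
  obtain ⟨i, hi, hi'⟩ := h
  refine ⟨i, fun j hj => ?_, ?_⟩
  · have hj' := hi j hj
    by_cases h1 : j = 1
    · subst h1; simp [addFst, hj']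
    · simp [addFst, h1, hj']
  · by_cases h1 : i = 1
    · subst h1; simp [addFst]; omega
    · simp only [addFst, if_neg h1]; exact hi'

lemma addFst_lexGE {c : ℕ} {u w : ℕ → ℕ} (h : lexGE u w) : lexGE (addFst c u) (addFst c w) := by
  rcases h with rfl | h
  · exact Or.inl rfl
  · exact Or.inr (addFst_lexGT h)

/-- For `m ≥ 1`, `1 ≤ c ≤ d−1`, `1 ≤ r ≤ C(m+d−c,d−c)` and `q ≥ d+1`, we have
`H_r(d−c,m;q) + c·q^(m−1) ≤ H_r(d,m;q)`, where `H_r(d,m;q) = Σ_{i=1}^m β_i q^(m−i)`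
with `(β_1,…,β_{m+1}) = w_r(d,m)`. -/
theorem H_sub_add_le_H (m d c r q : ℕ) (hm : 1 ≤ m) (hc : 1 ≤ c) (hcd : c ≤ d - 1)
    (hr1 : 1 ≤ r) (hr2 : r ≤ Nat.choose (m + (d - c)) (d - c)) (hq : d + 1 ≤ q)
    (β β' : ℕ → ℕ)
    (hβ : β ∈ Omega d m) (hβr : {u ∈ Omega d m | lexGE u β}.ncard = r)
    (hβ' : β' ∈ Omega (d - c) m)
    (hβ'r : {u ∈ Omega (d - c) m | lexGE u β'}.ncard = r) :
    (∑ i ∈ Finset.Icc 1 m, β' i * q ^ (m - i)) + c * q ^ (m - 1)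
      ≤ ∑ i ∈ Finset.Icc 1 m, β i * q ^ (m - i) := by
  classical
  have hd2 : 2 ≤ d := by omega
  have hcd' : c ≤ d := by omega
  have hφβ' : addFst c β' ∈ Omega d m := addFst_mem hcd' hβ'
  have hAfin : {u ∈ Omega d m | lexGE u (addFst c β')}.Finite :=
    (omega_finite d m).subset (fun x hx => hx.1)
  have hBfin : {u ∈ Omega d m | lexGE u β}.Finite :=
    (omega_finite d m).subset (fun x hx => hx.1)
  have himg : (addFst c) '' {u ∈ Omega (d - c) m | lexGE u β'}
      ⊆ {u ∈ Omega d m | lexGE u (addFst c β')} := by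
    rintro x ⟨y, ⟨hy1, hy2⟩, rfl⟩
    exact ⟨addFst_mem hcd' hy1, addFst_lexGE hy2⟩
  have hr' : r ≤ {u ∈ Omega d m | lexGE u (addFst c β')}.ncard := by
    rw [← hβ'r, ← Set.ncard_image_of_injective _ (addFst_injective c)]
    exact Set.ncard_le_ncard himg hAfin
  have hge : lexGE β (addFst c β') := by
    rcases lex_trichotomy β (addFst c β') with h | h | h
    · exact Or.inl h
    · exact Or.inr h
    · exfalso
      have hsub : {u ∈ Omega d m | lexGE u (addFst c β')} ⊂ {u ∈ Omega d m | lexGE u β} := by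
        constructor
        · rintro x ⟨hx1, hx2⟩
          refine ⟨hx1, ?_⟩
          rcases hx2 with rfl | hx2
          · exact Or.inr h
          · exact Or.inr (lexGT_trans hx2 h)
        · intro hcon
          have hβA : β ∈ {u ∈ Omega d m | lexGE u (addFst c β')} := hcon ⟨hβ, Or.inl rfl⟩
          rcases hβA.2 with he | hgt
          · rw [he] at h; exact lexGT_irrefl _ h
          · exact lexGT_asymm hgt h
      have := Set.ncard_lt_ncard hsub hBfin
      rw [hβr] at this
      omega
  have heq : ∑ i ∈ Finset.Icc 1 m, addFst c β' i * q ^ (m - i)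
      = (∑ i ∈ Finset.Icc 1 m, β' i * q ^ (m - i)) + c * q ^ (m - 1) := by
    have hrw : ∀ i ∈ Finset.Icc 1 m, addFst c β' i * q ^ (m - i)
        = β' i * q ^ (m - i) + (if i = 1 then c * q ^ (m - 1) else 0) := by
      intro i _
      by_cases h : i = 1 <;> simp [addFst, h, add_mul]
    rw [Finset.sum_congr rfl hrw, Finset.sum_add_distrib,
      Finset.sum_ite_eq' (Finset.Icc 1 m) 1 (fun _ => c * q ^ (m - 1)),
      if_pos (Finset.mem_Icc.mpr ⟨le_refl 1, hm⟩)]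
  calc (∑ i ∈ Finset.Icc 1 m, β' i * q ^ (m - i)) + c * q ^ (m - 1)
      = ∑ i ∈ Finset.Icc 1 m, addFst c β' i * q ^ (m - i) := heq.symm
    _ ≤ ∑ i ∈ Finset.Icc 1 m, β i * q ^ (m - i) := H_mono d m q hq hβ hφβ' hge
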